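/- Let L be a Lie algebra over a field F and let e₁, e₂, e₃, e₄ ∈ L be elements that are linearly independent modulo Z(L) and satisfy L = Z(L) + span{e₁, e₂, e₃, e₄}. Suppose ⁅e₁,e₃⁆ = ⁅e₁,e₄⁆ = ⁅e₂,e₃⁆ = ⁅e₂,e₄⁆ = 0 and the vectors ⁅e₁,e₂⁆ and ⁅e₃,e₄⁆ are linearly independent over F. Then the commuting graph Γ(L) is connected and diam(Γ(L)) = 3. -/

import Mathlib

/-!
With `A = span {e₁, e₂}` and `B = span {e₃, e₄}` we have `L = Z(L) + A + B` and `⁅A, B⁆ = 0`.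
Every element commutes with a noncentral `a ∈ A` (its own `A`-component, or `e₁`), and likewise
with a noncentral `b ∈ B`; as `⁅a, b⁆ = 0`, any two vertices are joined by a path `x, a, b, y`.
On the other hand `e₁ + e₃` and `e₂ + e₄` do not commute, and an element commuting with both has
zero coordinates along `e₁, …, e₄`, so it is central: these two vertices are at distance 3.
-/

/-- The commuting graph of a Lie algebra `L` over `F`: vertices are the elements of
`L` outside the center, and two distinct vertices are adjacent iff they commute. -/
def commutingGraph (F : Type*) [CommRing F] (L : Type*) [LieRing L] [LieAlgebra F L] :
    SimpleGraph {x : L // x ∉ LieAlgebra.center F L} where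
  Adj x y := x ≠ y ∧ ⁅(x : L), (y : L)⁆ = 0
  symm := ⟨fun x y h => ⟨h.1.symm, by rw [← lie_skew, h.2, neg_zero]⟩⟩
  loopless := ⟨fun x h => h.1 rfl⟩

open LieAlgebra Submodule

section

variable {R L : Type*} [CommRing R] [LieRing L] [LieAlgebra R L]

lemma lie_eq_zero_comm {x y : L} : ⁅x, y⁆ = 0 ↔ ⁅y, x⁆ = 0 := by
  rw [← lie_skew, neg_eq_zero]

lemma lie_eq_zero_of_mem_center_left {z : L} (hz : z ∈ center R L) (y : L) : ⁅z, y⁆ = 0 :=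
  lie_eq_zero_comm.mpr ((LieModule.mem_maxTrivSubmodule R L L z).mp hz y)

lemma notMem_center_right_of_lie_ne_zero {x y : L} (h : ⁅x, y⁆ ≠ 0) : y ∉ center R L :=
  fun hy => h ((LieModule.mem_maxTrivSubmodule R L L y).mp hy x)

lemma notMem_center_left_of_lie_ne_zero {x y : L} (h : ⁅x, y⁆ ≠ 0) : x ∉ center R L :=
  notMem_center_right_of_lie_ne_zero (mt lie_eq_zero_comm.mpr h)

lemma lie_eq_zero_of_mem_span {S T : Set L} (h : ∀ s ∈ S, ∀ t ∈ T, ⁅s, t⁆ = 0)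
    {a b : L} (ha : a ∈ span R S) (hb : b ∈ span R T) : ⁅a, b⁆ = 0 := by
  induction hb using Submodule.span_induction with
  | mem t ht =>
    induction ha using Submodule.span_induction with
    | mem s hs => exact h s hs t ht
    | zero => exact zero_lie t
    | add _ _ _ _ h₁ h₂ => rw [add_lie, h₁, h₂, add_zero]
    | smul c _ _ h₁ => rw [smul_lie, h₁, smul_zero]
  | zero => exact lie_zero a
  | add _ _ _ _ h₁ h₂ => rw [lie_add, h₁, h₂, add_zero]
  | smul c _ _ h₁ => rw [lie_smul, h₁, smul_zero]

/-- The witness is the `A`-component of `x`, or `e` when that component is central. -/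
lemma exists_notMem_center_lie_eq_zero {A B : Submodule R L}
    (hAB : ∀ a ∈ A, ∀ b ∈ B, ⁅a, b⁆ = 0) (htop : (center R L).toSubmodule ⊔ A ⊔ B = ⊤)
    {e : L} (heA : e ∈ A) (he : e ∉ center R L) (x : L) :
    ∃ a ∈ A, a ∉ center R L ∧ ⁅x, a⁆ = 0 := by
  obtain ⟨za, hza, b, hb, rfl⟩ := mem_sup.mp (htop ▸ mem_top : x ∈ _)
  obtain ⟨z, hz, a, ha, rfl⟩ := mem_sup.mp hza
  have hlie : ∀ c ∈ A, ⁅z + a + b, c⁆ = ⁅a, c⁆ := fun c hc => by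
    rw [add_lie, add_lie, lie_eq_zero_of_mem_center_left hz, lie_eq_zero_comm.mp (hAB c hc b hb),
      zero_add, add_zero]
  by_cases haZ : a ∈ center R L
  · exact ⟨e, heA, he, by rw [hlie e heA, lie_eq_zero_of_mem_center_left haZ]⟩
  · exact ⟨a, ha, haZ, by rw [hlie a ha, lie_self]⟩

namespace commutingGraph

lemma edist_le_one {x y : {x : L // x ∉ center R L}} (h : ⁅(x : L), (y : L)⁆ = 0) :
    (commutingGraph R L).edist x y ≤ 1 := by
  rw [SimpleGraph.edist_le_one_iff_adj_or_eq]
  by_cases hxy : x = y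
  · exact Or.inr hxy
  · exact Or.inl ⟨hxy, h⟩

lemma edist_le_three {x y : {x : L // x ∉ center R L}} {a b : L}
    (ha : a ∉ center R L) (hb : b ∉ center R L)
    (hxa : ⁅(x : L), a⁆ = 0) (hab : ⁅a, b⁆ = 0) (hby : ⁅b, (y : L)⁆ = 0) :
    (commutingGraph R L).edist x y ≤ 3 := by
  let G := commutingGraph R L
  calc G.edist x y ≤ G.edist x ⟨a, ha⟩ + G.edist ⟨a, ha⟩ y := SimpleGraph.edist_triangle
    _ ≤ G.edist x ⟨a, ha⟩ + (G.edist ⟨a, ha⟩ ⟨b, hb⟩ + G.edist ⟨b, hb⟩ y) := by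
        gcongr; exact SimpleGraph.edist_triangle
    _ ≤ 1 + (1 + 1) := by gcongr <;> exact edist_le_one ‹_›
    _ = 3 := by norm_num

lemma three_le_edist {x y : {x : L // x ∉ center R L}} (hxy : ⁅(x : L), (y : L)⁆ ≠ 0)
    (h : ∀ w : L, ⁅(x : L), w⁆ = 0 → ⁅w, (y : L)⁆ = 0 → w ∈ center R L) :
    3 ≤ (commutingGraph R L).edist x y := by
  have h2 : 2 < (commutingGraph R L).edist x y := by
    refine SimpleGraph.two_lt_edist_iff.mpr ⟨?_, fun hadj => hxy hadj.2, ?_⟩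
    · rintro rfl
      exact hxy (lie_self _)
    · refine Set.eq_empty_of_forall_notMem fun w hw => ?_
      rw [SimpleGraph.mem_commonNeighbors] at hw
      exact w.2 (h w hw.1.2 (lie_eq_zero_comm.mp hw.2.2))
  exact Order.add_one_le_of_lt h2

lemma ediam_le_three {A B : Submodule R L}
    (hAB : ∀ a ∈ A, ∀ b ∈ B, ⁅a, b⁆ = 0) (htop : (center R L).toSubmodule ⊔ A ⊔ B = ⊤)
    {e f : L} (heA : e ∈ A) (he : e ∉ center R L) (hfB : f ∈ B) (hf : f ∉ center R L) :
    (commutingGraph R L).ediam ≤ 3 := by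
  have hBA : ∀ b ∈ B, ∀ a ∈ A, ⁅b, a⁆ = 0 := fun b hb a ha => lie_eq_zero_comm.mp (hAB a ha b hb)
  have htop' : (center R L).toSubmodule ⊔ B ⊔ A = ⊤ := by rwa [sup_right_comm]
  refine SimpleGraph.ediam_le_of_edist_le fun x y => ?_
  obtain ⟨a, ha, haZ, hxa⟩ := exists_notMem_center_lie_eq_zero hAB htop heA he x
  obtain ⟨b, hb, hbZ, hyb⟩ := exists_notMem_center_lie_eq_zero hBA htop' hfB hf y
  exact edist_le_three haZ hbZ hxa (hAB a ha b hb) (lie_eq_zero_comm.mp hyb)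

end commutingGraph

/-- Bracketing with `e₁ + e₃` and with `e₂ + e₄` reads off the `e₂, e₄` and the `e₁, e₃`
coordinates of `w`. -/
lemma mem_center_of_lie_add_eq_zero {e₁ e₂ e₃ e₄ w : L}
    (hspan : (center R L).toSubmodule ⊔ span R {e₁, e₂, e₃, e₄} = ⊤)
    (h13 : ⁅e₁, e₃⁆ = 0) (h14 : ⁅e₁, e₄⁆ = 0) (h23 : ⁅e₂, e₃⁆ = 0) (h24 : ⁅e₂, e₄⁆ = 0)
    (hbr : LinearIndependent R ![⁅e₁, e₂⁆, ⁅e₃, e₄⁆])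
    (h₁ : ⁅e₁ + e₃, w⁆ = 0) (h₂ : ⁅w, e₂ + e₄⁆ = 0) : w ∈ center R L := by
  obtain ⟨z, hz, v, hv, rfl⟩ := mem_sup.mp (hspan ▸ mem_top : w ∈ _)
  obtain ⟨a₁, u, hu, rfl⟩ := mem_span_insert.mp hv
  obtain ⟨a₂, a₃, a₄, rfl⟩ := mem_span_triple.mp hu
  have hzl := lie_eq_zero_of_mem_center_left (R := R) hz
  have hzr := (LieModule.mem_maxTrivSubmodule R L L z).mp hz
  simp only [lie_add, add_lie, lie_smul, smul_lie, hzl, hzr, lie_self, h13, h14, h24,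
    lie_eq_zero_comm.mp h13, lie_eq_zero_comm.mp h23, lie_eq_zero_comm.mp h24, smul_zero,
    zero_add, add_zero] at h₁ h₂
  obtain ⟨rfl, rfl⟩ := LinearIndependent.pair_iff.mp hbr _ _ h₁
  obtain ⟨rfl, rfl⟩ := LinearIndependent.pair_iff.mp hbr _ _ h₂
  simpa using hz

end

theorem stmt15_general (F : Type*) [Field F] (L : Type*) [LieRing L] [LieAlgebra F L]
    (e₁ e₂ e₃ e₄ : L)
    (hspan : (LieAlgebra.center F L).toSubmodule ⊔
      Submodule.span F {e₁, e₂, e₃, e₄} = ⊤)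
    (h13 : ⁅e₁, e₃⁆ = 0) (h14 : ⁅e₁, e₄⁆ = 0) (h23 : ⁅e₂, e₃⁆ = 0) (h24 : ⁅e₂, e₄⁆ = 0)
    (hbr : LinearIndependent F ![⁅e₁, e₂⁆, ⁅e₃, e₄⁆]) :
    (commutingGraph F L).Connected ∧ (commutingGraph F L).ediam = 3 := by
  have hAB : ∀ a ∈ span F {e₁, e₂}, ∀ b ∈ span F {e₃, e₄}, ⁅a, b⁆ = 0 :=
    fun a ha b hb => lie_eq_zero_of_mem_span (by simp [h13, h14, h23, h24]) ha hb
  have htop : (center F L).toSubmodule ⊔ span F {e₁, e₂} ⊔ span F {e₃, e₄} = ⊤ := by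
    rwa [sup_assoc, ← span_union, Set.insert_union, Set.singleton_union]
  have h12 : ⁅e₁, e₂⁆ ≠ 0 := hbr.ne_zero 0
  have h34 : ⁅e₃, e₄⁆ ≠ 0 := hbr.ne_zero 1
  have hxy : ⁅e₁ + e₃, e₂ + e₄⁆ ≠ 0 := by
    rw [add_lie, lie_add, lie_add, h14, lie_eq_zero_comm.mp h23, add_zero, zero_add]
    intro h
    exact one_ne_zero (LinearIndependent.pair_iff.mp hbr 1 1 (by rwa [one_smul, one_smul])).1
  have hle := commutingGraph.ediam_le_three hAB htop (subset_span (by simp))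
    (notMem_center_left_of_lie_ne_zero h12) (subset_span (by simp))
    (notMem_center_left_of_lie_ne_zero h34)
  let x : {x : L // x ∉ center F L} := ⟨e₁ + e₃, notMem_center_left_of_lie_ne_zero hxy⟩
  let y : {x : L // x ∉ center F L} := ⟨e₂ + e₄, notMem_center_right_of_lie_ne_zero hxy⟩
  have hge : 3 ≤ (commutingGraph F L).edist x y := commutingGraph.three_le_edist hxy
    fun w h₁ h₂ => mem_center_of_lie_add_eq_zero hspan h13 h14 h23 h24 hbr h₁ h₂
  have hdiam := le_antisymm hle (hge.trans SimpleGraph.edist_le_ediam)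
  have : Nonempty {x : L // x ∉ center F L} := ⟨x⟩
  exact ⟨SimpleGraph.connected_of_ediam_ne_top (by simp [hdiam]), hdiam⟩

/-- let `e₁, e₂, e₃, e₄ ∈ L` be linearly independent modulo the center with
`L = Z(L) + span {e₁, e₂, e₃, e₄}`, with all cross brackets between `{e₁,e₂}` and `{e₃,e₄}`
zero and `⁅e₁,e₂⁆`, `⁅e₃,e₄⁆` linearly independent. Then the commuting graph of `L` is
connected with diameter 3. -/
theorem stmt15 (F : Type*) [Field F] (L : Type*) [LieRing L] [LieAlgebra F L]
    (e₁ e₂ e₃ e₄ : L)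
    (hli : LinearIndependent F fun i =>
      (Submodule.Quotient.mk (![e₁, e₂, e₃, e₄] i) :
        L ⧸ (LieAlgebra.center F L).toSubmodule))
    (hspan : (LieAlgebra.center F L).toSubmodule ⊔
      Submodule.span F {e₁, e₂, e₃, e₄} = ⊤)
    (h13 : ⁅e₁, e₃⁆ = 0) (h14 : ⁅e₁, e₄⁆ = 0) (h23 : ⁅e₂, e₃⁆ = 0) (h24 : ⁅e₂, e₄⁆ = 0)
    (hbr : LinearIndependent F ![⁅e₁, e₂⁆, ⁅e₃, e₄⁆]) :
    (commutingGraph F L).Connected ∧ (commutingGraph F L).ediam = 3 :=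
  stmt15_general F L e₁ e₂ e₃ e₄ hspan h13 h14 h23 h24 hbr
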